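/- For the Hermite polynomials H_m and H_{n;c} := H_n + c·H_{n−1}, for n ≥ 2 and constants s, t with t ≠ 0: Res(H_{n;s}, H_{n−1;t}) = (−1)^{n(n+1)/2} · 2^{n(3n−5)/2} / (n−1)^n · ∏_{k=1}^{n−1} k^k · t^n · H_{n;s}(−(2(n−1)+st)/(2t)). -/

import Mathlib

open Polynomial

/-! Write `g = H_{n-1;t}`, `f = H_{n;s}` and `x₀ = -(2(n-1)+st)/(2t)`. The three-term
recurrence gives `t f = 2t (X - x₀) H_{n-1} - 2(n-1) g`, so modulo `g` the polynomial `t f` is a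
linear factor times `H_{n-1}`, and `H_{n-1} ≡ -t H_{n-2}`. Multiplicativity of the resultant thus
reduces `Res(g, f)` to `g(x₀)`, which the same identity expresses through `f(x₀)`, times
`Res(H_{n-2}, H_{n-1})`. The latter equals `∏_{k ≤ n-2} (-8k)^k`, by running the Euclidean
algorithm along the recurrence. -/

/-- The resultant: `Res f g = lc(f)^(deg g) * ∏_{α root of f} g(α)`. -/
noncomputable def Res (f g : Polynomial ℂ) : ℂ :=
  f.leadingCoeff ^ g.natDegree * (f.roots.map (fun a => g.eval a)).prod

/-- The physicists' Hermite polynomials. -/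
noncomputable def H : ℕ → Polynomial ℂ
  | 0 => 1
  | 1 => 2 * X
  | (n + 2) => 2 * X * H (n + 1) - C (2 * (n + 1 : ℂ)) * H n

theorem Res_eq_resultant (f g : ℂ[X]) : Res f g = f.resultant g :=
  (resultant_eq_prod_eval f g _ le_rfl (IsAlgClosed.splits f)).symm

theorem Polynomial.resultant_eq_of_eq_mul_add {R : Type*} [CommRing R] {f g q r : R[X]}
    (h : g = f * q + r) (hq : q.natDegree + f.natDegree ≤ g.natDegree)
    (hr : r.natDegree ≤ g.natDegree) :
    f.resultant g = f.leadingCoeff ^ (g.natDegree - r.natDegree) * f.resultant r := by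
  have hrem := resultant_add_mul_right f r q f.natDegree g.natDegree hq le_rfl
  rw [add_comm, ← h] at hrem
  rw [hrem, ← coeff_natDegree, ← resultant_add_right_deg f r _ _ _ le_rfl, Nat.add_sub_cancel' hr]

theorem Polynomial.resultant_comm_of_natDegree_eq_succ {R : Type*} [CommRing R] {f g : R[X]}
    (h : f.natDegree = g.natDegree + 1) : f.resultant g = g.resultant f := by
  rw [resultant_comm, h, Even.neg_one_pow (by rw [mul_comm]; exact Nat.even_mul_succ_self _),
    one_mul]

theorem H_add_two (n : ℕ) : H (n + 2) = 2 * X * H (n + 1) - C (2 * (n + 1 : ℂ)) * H n := rfl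

theorem natDegree_H_le_and_coeff_H : ∀ n : ℕ, (H n).natDegree ≤ n ∧ (H n).coeff n = 2 ^ n
  | 0 => by simp [H]
  | 1 => by
    refine ⟨?_, ?_⟩ <;> simp [H, ← C_ofNat]
  | n + 2 => by
    obtain ⟨hd₁, hc₁⟩ := natDegree_H_le_and_coeff_H (n + 1)
    obtain ⟨hd₀, hc₀⟩ := natDegree_H_le_and_coeff_H n
    rw [H_add_two, ← C_ofNat, mul_assoc]
    refine ⟨?_, ?_⟩
    · refine (natDegree_sub_le _ _).trans (max_le ((natDegree_C_mul_le _ _).trans ?_)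
        ((natDegree_C_mul_le _ _).trans (by omega)))
      exact natDegree_mul_le.trans (by rw [natDegree_X]; omega)
    · rw [coeff_sub, coeff_C_mul, coeff_C_mul, coeff_X_mul, hc₁,
        coeff_eq_zero_of_natDegree_lt (by omega : (H n).natDegree < n + 2)]
      ring

theorem natDegree_H (n : ℕ) : (H n).natDegree = n :=
  natDegree_eq_of_le_of_coeff_ne_zero (natDegree_H_le_and_coeff_H n).1
    (by simp [(natDegree_H_le_and_coeff_H n).2])

theorem leadingCoeff_H (n : ℕ) : (H n).leadingCoeff = 2 ^ n := by
  rw [leadingCoeff, natDegree_H, (natDegree_H_le_and_coeff_H n).2]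

theorem H_ne_zero (n : ℕ) : H n ≠ 0 :=
  leadingCoeff_ne_zero.mp (by rw [leadingCoeff_H]; exact pow_ne_zero n two_ne_zero)

theorem natDegree_C_mul_H_lt (k : ℕ) (a : ℂ) : (C a * H k).natDegree < (H (k + 1)).natDegree :=
  (natDegree_C_mul_le _ _).trans_lt (by simp [natDegree_H])

theorem natDegree_H_add_C_mul (k : ℕ) (a : ℂ) : (H (k + 1) + C a * H k).natDegree = k + 1 := by
  rw [natDegree_add_eq_left_of_natDegree_lt (natDegree_C_mul_H_lt k a), natDegree_H]

theorem leadingCoeff_H_add_C_mul (k : ℕ) (a : ℂ) :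
    (H (k + 1) + C a * H k).leadingCoeff = 2 ^ (k + 1) := by
  rw [leadingCoeff_add_of_degree_lt' (degree_lt_degree (natDegree_C_mul_H_lt k a)),
    leadingCoeff_H]

theorem resultant_H_H_succ : ∀ m : ℕ,
    (H m).resultant (H (m + 1)) = ∏ k ∈ Finset.Icc 1 m, ((-8 : ℂ) * k) ^ k
  | 0 => by simp [H]
  | m + 1 => by
    have hc : -(2 * ((m : ℂ) + 1)) ≠ 0 := by
      rw [neg_ne_zero]; exact mul_ne_zero two_ne_zero (by exact_mod_cast m.succ_ne_zero)
    have hrec : H (m + 2) = H (m + 1) * (2 * X) + C (-(2 * ((m : ℂ) + 1))) * H m := by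
      rw [H_add_two, map_neg]; ring
    have ih := resultant_H_H_succ m
    rw [natDegree_H, natDegree_H] at ih
    rw [resultant_eq_of_eq_mul_add hrec (by simp [natDegree_H]; omega)
        ((natDegree_C_mul_le _ _).trans (by simp [natDegree_H])),
      natDegree_C_mul hc, resultant_C_mul_right,
      resultant_comm_of_natDegree_eq_succ (by simp [natDegree_H]), natDegree_H, natDegree_H,
      natDegree_H, ih, leadingCoeff_H, Finset.prod_Icc_succ_top (by omega), Nat.add_sub_cancel_left,
      ← mul_assoc, ← pow_mul, mul_comm (m + 1), pow_mul, ← mul_pow, mul_comm]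
    push_cast
    ring

section

variable (m : ℕ) (s : ℂ) {t : ℂ}

theorem C_mul_H_add_C_mul_H_eq :
    C t * (H (m + 2) + C s * H (m + 1)) = (H (m + 1) + C t * H m) * C (-(2 * ((m : ℂ) + 1)))
      + (C (2 * t) * X + C (2 * ((m : ℂ) + 1) + s * t)) * H (m + 1) := by
  rw [H_add_two]
  simp only [map_add, map_mul, map_neg, map_ofNat, map_one, map_natCast]
  ring

theorem resultant_H_add_C_mul_H_H (ht : t ≠ 0) :
    (H (m + 1) + C t * H m).resultant (H (m + 1))
      = 2 ^ (m + 1) * (-t) ^ (m + 1) * ∏ k ∈ Finset.Icc 1 m, ((-8 : ℂ) * k) ^ k := by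
  have hneg : -t ≠ 0 := neg_ne_zero.mpr ht
  have hH : H (m + 1) = (H (m + 1) + C t * H m) * 1 + C (-t) * H m := by
    rw [map_neg]; ring
  have hg : H (m + 1) + C t * H m = H m * C t + H (m + 1) := by ring
  rw [resultant_eq_of_eq_mul_add hH (by simp [natDegree_H_add_C_mul, natDegree_H])
      ((natDegree_C_mul_le _ _).trans (by simp [natDegree_H])),
    natDegree_C_mul hneg, resultant_C_mul_right,
    resultant_comm_of_natDegree_eq_succ (by rw [natDegree_H_add_C_mul, natDegree_H]),
    resultant_eq_of_eq_mul_add hg (by simp [natDegree_H_add_C_mul, natDegree_H])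
      (by simp [natDegree_H_add_C_mul, natDegree_H]),
    resultant_H_H_succ, leadingCoeff_H_add_C_mul, leadingCoeff_H,
    natDegree_H_add_C_mul, natDegree_H, natDegree_H, Nat.add_sub_cancel_left, Nat.sub_self]
  ring

theorem resultant_H_add_C_mul_H_H_add_C_mul_H (ht : t ≠ 0) {x : ℂ}
    (hx : 2 * t * x + (2 * ((m : ℂ) + 1) + s * t) = 0) :
    (H (m + 1) + C t * H m).resultant (H (m + 2) + C s * H (m + 1))
      = 2 ^ (2 * m + 2) * t ^ (m + 1) * (H (m + 1) + C t * H m).eval x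
        * ∏ k ∈ Finset.Icc 1 m, ((-8 : ℂ) * k) ^ k := by
  have hid := C_mul_H_add_C_mul_H_eq m s (t := t)
  rw [show C (2 * t) * X + C (2 * ((m : ℂ) + 1) + s * t) = C (2 * t) * (X - C x) by
    rw [mul_sub, ← C_mul, show 2 * t * x = -(2 * ((m : ℂ) + 1) + s * t) by linear_combination hx,
      map_neg, sub_neg_eq_add]] at hid
  set g := H (m + 1) + C t * H m
  set p := C (2 * t) * (X - C x)
  have h2t : 2 * t ≠ 0 := mul_ne_zero two_ne_zero ht
  have hp_ne : p ≠ 0 := mul_ne_zero (C_ne_zero.mpr h2t) (X_sub_C_ne_zero x)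
  have hp_deg : p.natDegree = 1 := by rw [natDegree_C_mul h2t, natDegree_X_sub_C]
  have hpH_deg : (p * H (m + 1)).natDegree = m + 2 := by
    rw [natDegree_mul hp_ne (H_ne_zero _), hp_deg, natDegree_H, add_comm]
  refine mul_left_cancel₀ (pow_ne_zero (m + 1) ht) ?_
  calc t ^ (m + 1) * g.resultant (H (m + 2) + C s * H (m + 1))
      = g.resultant (C t * (H (m + 2) + C s * H (m + 1))) := by
        rw [resultant_C_mul_right, natDegree_C_mul ht, natDegree_H_add_C_mul]
    _ = g.resultant (p * H (m + 1)) := by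
        rw [resultant_eq_of_eq_mul_add hid
            (by simp only [natDegree_C, natDegree_C_mul ht, g, natDegree_H_add_C_mul]; omega)
            (by rw [hpH_deg, natDegree_C_mul ht, natDegree_H_add_C_mul]),
          hpH_deg, natDegree_C_mul ht, natDegree_H_add_C_mul, Nat.sub_self, pow_zero, one_mul]
    _ = g.resultant p * g.resultant (H (m + 1)) := by
        rw [← resultant_mul_right _ _ _ _ le_rfl, natDegree_mul hp_ne (H_ne_zero _)]
    _ = (2 * t) ^ (m + 1) * ((-1) ^ (m + 1) * g.eval x)
          * (2 ^ (m + 1) * (-t) ^ (m + 1) * ∏ k ∈ Finset.Icc 1 m, ((-8 : ℂ) * k) ^ k) := by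
        rw [resultant_H_add_C_mul_H_H m ht, hp_deg, resultant_C_mul_right,
          resultant_X_sub_C_right _ _ _ le_rfl, natDegree_H_add_C_mul]
    _ = t ^ (m + 1) * (2 ^ (2 * m + 2) * t ^ (m + 1) * g.eval x
          * ∏ k ∈ Finset.Icc 1 m, ((-8 : ℂ) * k) ^ k) := by
        have hsign : ((-1 : ℂ)) ^ (m + 1) * (-1) ^ (m + 1) = 1 := by rw [← mul_pow]; norm_num
        rw [neg_pow t]
        linear_combination (2 ^ (2 * m + 2) * t ^ (m + 1) * t ^ (m + 1) * g.eval x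
          * ∏ k ∈ Finset.Icc 1 m, ((-8 : ℂ) * k) ^ k) * hsign

theorem two_mul_eval_H_add_C_mul_H {x : ℂ} (hx : 2 * t * x + (2 * ((m : ℂ) + 1) + s * t) = 0) :
    2 * ((m : ℂ) + 1) * (H (m + 1) + C t * H m).eval x
      = -(t * (H (m + 2) + C s * H (m + 1)).eval x) := by
  have h := congrArg (eval x) (C_mul_H_add_C_mul_H_eq m s (t := t))
  simp only [eval_mul, eval_add, eval_C, eval_X] at h ⊢
  linear_combination h + (H (m + 1)).eval x * hx

end

theorem sum_Icc_id_mul_two (m : ℕ) : (∑ k ∈ Finset.Icc 1 m, k) * 2 = m * (m + 1) := by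
  induction m with
  | zero => rfl
  | succ m ih => rw [Finset.sum_Icc_succ_top (by omega), add_mul, ih]; ring

theorem prod_Icc_neg_eight_mul_pow (m : ℕ) :
    ∏ k ∈ Finset.Icc 1 m, ((-8 : ℂ) * k) ^ k
      = (-1) ^ (∑ k ∈ Finset.Icc 1 m, k) * 2 ^ (3 * ∑ k ∈ Finset.Icc 1 m, k)
        * ∏ k ∈ Finset.Icc 1 m, (k : ℂ) ^ k := by
  simp_rw [mul_pow]
  rw [Finset.prod_mul_distrib, Finset.prod_pow_eq_pow_sum, show (-8 : ℂ) = -1 * 2 ^ 3 by norm_num,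
    mul_pow, ← pow_mul]

theorem neg_one_pow_mul_two_pow_eq (m : ℕ) :
    (-1 : ℂ) ^ ((m + 2) * (m + 2 + 1) / 2) * 2 ^ ((m + 2) * (3 * (m + 2) - 5) / 2)
      = -((-1) ^ (∑ k ∈ Finset.Icc 1 m, k) * 2 ^ (3 * ∑ k ∈ Finset.Icc 1 m, k)
          * 2 ^ (2 * m + 1)) := by
  have hT := sum_Icc_id_mul_two m
  set T := ∑ k ∈ Finset.Icc 1 m, k
  have hsign : (m + 2) * (m + 2 + 1) / 2 = T + 2 * (m + 1) + 1 :=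
    Nat.div_eq_of_eq_mul_left two_pos (by linarith)
  have hexp : (m + 2) * (3 * (m + 2) - 5) / 2 = 3 * T + (2 * m + 1) := by
    rw [show 3 * (m + 2) - 5 = 3 * m + 1 by omega]
    exact Nat.div_eq_of_eq_mul_left two_pos (by linarith)
  rw [hsign, hexp, pow_succ, pow_add, pow_mul, neg_one_sq, one_pow, pow_add]
  ring

theorem stmt_10 (n : ℕ) (hn : 2 ≤ n) (s t : ℂ) (ht : t ≠ 0) :
    Res (H n + C s * H (n - 1)) (H (n - 1) + C t * H (n - 2)) =
      (-1) ^ (n * (n + 1) / 2) * 2 ^ (n * (3 * n - 5) / 2) / ((n : ℂ) - 1) ^ n *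
        (∏ k ∈ Finset.Icc 1 (n - 1), (k : ℂ) ^ k) * t ^ n *
        (H n + C s * H (n - 1)).eval (-(2 * ((n : ℂ) - 1) + s * t) / (2 * t)) := by
  obtain ⟨m, rfl⟩ : ∃ m, n = m + 2 := ⟨n - 2, by omega⟩
  have hμ : ((m + 2 : ℕ) : ℂ) - 1 = m + 1 := by push_cast; ring
  have hx : 2 * t * (-(2 * ((m : ℂ) + 1) + s * t) / (2 * t)) + (2 * ((m : ℂ) + 1) + s * t) = 0 := by
    field_simp; ring
  rw [show m + 2 - 1 = m + 1 by omega, show m + 2 - 2 = m by omega, hμ, Res_eq_resultant,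
    resultant_comm_of_natDegree_eq_succ (by simp only [natDegree_H_add_C_mul]),
    resultant_H_add_C_mul_H_H_add_C_mul_H m s ht hx, prod_Icc_neg_eight_mul_pow,
    Finset.prod_Icc_succ_top (by omega), neg_one_pow_mul_two_pow_eq]
  have heval := two_mul_eval_H_add_C_mul_H m s hx
  -- opaque evaluation point, so that `field_simp` leaves the arguments of `eval` alone
  set x := -(2 * ((m : ℂ) + 1) + s * t) / (2 * t)
  push_cast
  field_simp
  linear_combination (∏ k ∈ Finset.Icc 1 m, (k : ℂ) ^ k) * 2 ^ (2 * m + 1) * ((m : ℂ) + 1) ^ (m + 1)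
    * t ^ (m + 1) * heval
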